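/- arXiv:2502.13786 — 3 statements merged into one kernel-verified Lean document; each statement's English description precedes it below -/
import Mathlib

section
/- Let G be a finite abelian group with Fourier transform normalized so that f̂(χ) = |G|^{-1/2} ∑_{x∈G} f(x) conj(χ(x)) (so that Plancherel holds with constant 1). Let S ⊆ G and Σ ⊆ Ĝ, and suppose Σ satisfies a (p,q)-restriction estimate with constant ρ, i.e. ‖(1_S f)^‖_{ℓ^q(Σ)} ≤ ρ ‖1_S f‖_{ℓ^p(G)} for all f, where 1 ≤ p ≤ 2 ≤ q. If ρ · |S|^{1/p − 1/2} · |Σ|^{1/2 − 1/q} < 1, then for every f : G → ℂ, ‖f‖_{ℓ²(G)} ≤ (1 − ρ |S|^{1/p−1/2} |Σ|^{1/2−1/q})^{-1} (‖f‖_{ℓ²(G∖S)} + ‖f̂‖_{ℓ²(Ĝ∖Σ)}). -/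
open Finset ComplexConjugate

/-- ℓ²-norm of `f` over the finite set `T`. -/
noncomputable def l2norm {α : Type*} (T : Finset α) (f : α → ℂ) : ℝ :=
  Real.sqrt (∑ x ∈ T, ‖f x‖ ^ 2)

/-- ℓ^p-norm (p a real exponent) of `f` over the finite set `T`. -/
noncomputable def lpnorm {α : Type*} (p : ℝ) (T : Finset α) (f : α → ℂ) : ℝ :=
  (∑ x ∈ T, ‖f x‖ ^ p) ^ (1 / p)

/-- The unitary Fourier transform on a finite abelian group:
`f̂(χ) = |G|^{-1/2} ∑_x f x * conj (χ x)`. -/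
noncomputable def dft {G : Type*} [AddCommGroup G] [Fintype G]
    (f : G → ℂ) (χ : AddChar G ℂ) : ℂ :=
  (Real.sqrt (Fintype.card G) : ℂ)⁻¹ * ∑ x, f x * conj (χ x)


/-! Write `f = g + h` with `g = 1_S f` and `h = 1_{Sᶜ} f`. Comparing the `ℓᵖ` and `ℓ²` norms on `S`,
and the `ℓ²` and `ℓ^q` norms on `Σ`, turns the restriction estimate into `‖ĝ‖_{ℓ²(Σ)} ≤ ε ‖f‖₂`
with `ε = ρ |S|^{1/p-1/2} |Σ|^{1/2-1/q}`, while Plancherel gives `‖ĥ‖_{ℓ²(Σ)} ≤ ‖h‖₂ = ‖f‖_{ℓ²(Sᶜ)}`.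
Hence `‖f‖₂ = ‖f̂‖₂ ≤ ε ‖f‖₂ + ‖f‖_{ℓ²(Sᶜ)} + ‖f̂‖_{ℓ²(Σᶜ)}`, and `ε < 1` lets one absorb the
first term. -/

section Norms

variable {α : Type*}

theorem l2norm_eq_lpnorm_two (T : Finset α) (f : α → ℂ) : l2norm T f = lpnorm 2 T f := by
  rw [l2norm, lpnorm, Real.sqrt_eq_rpow]
  simp_rw [← Real.rpow_natCast, Nat.cast_ofNat]

theorem l2norm_mono {T T' : Finset α} (h : T ⊆ T') (f : α → ℂ) : l2norm T f ≤ l2norm T' f :=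
  Real.sqrt_le_sqrt (sum_le_sum_of_subset_of_nonneg h fun _ _ _ ↦ by positivity)

theorem lpnorm_add_le {p : ℝ} (hp : 1 ≤ p) (T : Finset α) (f g : α → ℂ) :
    lpnorm p T (f + g) ≤ lpnorm p T f + lpnorm p T g :=
  calc lpnorm p T (f + g) ≤ (∑ x ∈ T, (‖f x‖ + ‖g x‖) ^ p) ^ (1 / p) := by
        unfold lpnorm
        gcongr with x
        exact norm_add_le (f x) (g x)
    _ ≤ lpnorm p T f + lpnorm p T g :=
        Real.Lp_add_le_of_nonneg T hp (fun _ _ ↦ norm_nonneg _) fun _ _ ↦ norm_nonneg _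

theorem l2norm_add_le (T : Finset α) (f g : α → ℂ) :
    l2norm T (f + g) ≤ l2norm T f + l2norm T g := by
  simpa only [l2norm_eq_lpnorm_two] using lpnorm_add_le one_le_two T f g

theorem lpnorm_le_card_rpow_mul_lpnorm {r t : ℝ} (hr : 0 < r) (hrt : r ≤ t) (T : Finset α)
    (f : α → ℂ) : lpnorm r T f ≤ (#T : ℝ) ^ (1 / r - 1 / t) * lpnorm t T f := by
  have ht : 0 < t := hr.trans_le hrt
  have key := Real.rpow_sum_le_const_mul_sum_rpow_of_nonneg T ((one_le_div hr).2 hrt)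
    (f := fun x ↦ ‖f x‖ ^ r) fun _ _ ↦ by positivity
  simp_rw [← Real.rpow_mul (norm_nonneg _), mul_div_cancel₀ _ hr.ne'] at key
  calc lpnorm r T f = ((∑ x ∈ T, ‖f x‖ ^ r) ^ (t / r)) ^ (1 / t) := by
        rw [lpnorm, ← Real.rpow_mul (by positivity)]
        field_simp
    _ ≤ ((#T : ℝ) ^ (t / r - 1) * ∑ x ∈ T, ‖f x‖ ^ t) ^ (1 / t) := by gcongr
    _ = (#T : ℝ) ^ (1 / r - 1 / t) * lpnorm t T f := by
        rw [Real.mul_rpow (by positivity) (by positivity), ← Real.rpow_mul (by positivity), lpnorm]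
        congr 2
        field_simp

variable [Fintype α] [DecidableEq α]

theorem lpnorm_univ_ite_mem {p : ℝ} (hp : p ≠ 0) (T : Finset α) (f : α → ℂ) :
    lpnorm p univ (fun x ↦ if x ∈ T then f x else 0) = lpnorm p T f := by
  simp_rw [lpnorm, apply_ite (fun z : ℂ ↦ ‖z‖ ^ p), norm_zero, Real.zero_rpow hp, sum_ite_mem,
    univ_inter]

theorem l2norm_univ_ite_mem (T : Finset α) (f : α → ℂ) :
    l2norm univ (fun x ↦ if x ∈ T then f x else 0) = l2norm T f := by
  simp only [l2norm_eq_lpnorm_two, lpnorm_univ_ite_mem two_ne_zero]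

theorem ite_mem_add_ite_mem_compl (T : Finset α) (f : α → ℂ) :
    ((fun x ↦ if x ∈ T then f x else 0) + fun x ↦ if x ∈ Tᶜ then f x else 0) = f := by
  ext x
  by_cases hx : x ∈ T <;> simp [hx]

theorem l2norm_univ_le_add_compl (T : Finset α) (f : α → ℂ) :
    l2norm univ f ≤ l2norm T f + l2norm Tᶜ f := by
  conv_lhs => rw [← ite_mem_add_ite_mem_compl T f]
  refine (l2norm_add_le _ _ _).trans ?_
  rw [l2norm_univ_ite_mem, l2norm_univ_ite_mem]

end Norms

theorem l2norm_le_of_lpnorm_le {α β : Type*} {S : Finset α} {Sig : Finset β} {f : α → ℂ}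
    {u : β → ℂ} {p q ρ : ℝ} (hp : 0 < p) (hp2 : p ≤ 2) (hq : 2 ≤ q) (hρ : 0 ≤ ρ)
    (h : lpnorm q Sig u ≤ ρ * lpnorm p S f) :
    l2norm Sig u ≤ ρ * (#S : ℝ) ^ (1 / p - 1 / 2) * (#Sig : ℝ) ^ (1 / 2 - 1 / q) * l2norm S f :=
  calc l2norm Sig u ≤ (#Sig : ℝ) ^ (1 / 2 - 1 / q) * lpnorm q Sig u := by
        rw [l2norm_eq_lpnorm_two]
        exact lpnorm_le_card_rpow_mul_lpnorm two_pos hq Sig u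
    _ ≤ (#Sig : ℝ) ^ (1 / 2 - 1 / q) * (ρ * ((#S : ℝ) ^ (1 / p - 1 / 2) * l2norm S f)) := by
        rw [l2norm_eq_lpnorm_two]
        gcongr
        exact h.trans (by gcongr; exact lpnorm_le_card_rpow_mul_lpnorm hp hp2 S f)
    _ = ρ * (#S : ℝ) ^ (1 / p - 1 / 2) * (#Sig : ℝ) ^ (1 / 2 - 1 / q) * l2norm S f := by ring

section Fourier

variable {G : Type*} [AddCommGroup G] [Fintype G]

theorem dft_add (f g : G → ℂ) : dft (f + g) = dft f + dft g := by
  ext χ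
  simp only [dft, Pi.add_apply, add_mul, sum_add_distrib, mul_add]

theorem sum_norm_dft_sq [DecidableEq G] (f : G → ℂ) :
    ∑ χ : AddChar G ℂ, ‖dft f χ‖ ^ 2 = ∑ x, ‖f x‖ ^ 2 := by
  have hG : (Fintype.card G : ℂ) ≠ 0 := by simp
  have hχ (χ : AddChar G ℂ) : dft f χ * conj (dft f χ)
      = (Fintype.card G : ℂ)⁻¹ * ∑ x, ∑ y, f x * conj (f y) * χ (y - x) := by
    rw [dft, map_mul, mul_mul_mul_comm, map_inv₀, Complex.conj_ofReal, ← mul_inv,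
      ← Complex.ofReal_mul, Real.mul_self_sqrt (Nat.cast_nonneg _), Complex.ofReal_natCast,
      map_sum, sum_mul_sum]
    congr 1
    refine sum_congr rfl fun x _ ↦ sum_congr rfl fun y _ ↦ ?_
    rw [map_mul, Complex.conj_conj, sub_eq_add_neg, AddChar.map_add_eq_mul,
      AddChar.map_neg_eq_conj]
    ring
  suffices ∑ χ : AddChar G ℂ, dft f χ * conj (dft f χ) = ∑ x, f x * conj (f x) by
    simp only [Complex.mul_conj'] at this
    exact_mod_cast congrArg Complex.re this
  calc ∑ χ : AddChar G ℂ, dft f χ * conj (dft f χ)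
      = (Fintype.card G : ℂ)⁻¹ * ∑ x : G, ∑ y : G,
          f x * conj (f y) * ∑ χ : AddChar G ℂ, χ (y - x) := by
        simp_rw [hχ, ← mul_sum]
        rw [sum_comm]
        simp_rw [sum_comm (γ := AddChar G ℂ), mul_sum]
    _ = ∑ x, f x * conj (f x) := by
        simp_rw [AddChar.sum_apply_eq_ite, sub_eq_zero, mul_ite, mul_zero, sum_ite_eq', mem_univ,
          if_true, ← sum_mul]
        field_simp

theorem l2norm_univ_dft [DecidableEq G] (f : G → ℂ) : l2norm univ (dft f) = l2norm univ f := by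
  rw [l2norm, l2norm, sum_norm_dft_sq]

end Fourier

/-- If `Σ` satisfies a `(p,q)`-restriction estimate with constant `ρ`,
`1 ≤ p ≤ 2 ≤ q`, and `ρ |S|^{1/p-1/2} |Σ|^{1/2-1/q} < 1`, then `(S,Σ)` is a strong
annihilating pair with constant `(1 - ρ |S|^{1/p-1/2} |Σ|^{1/2-1/q})⁻¹`. -/
theorem stmt0 {G : Type} [AddCommGroup G] [Fintype G] [DecidableEq G]
    (S : Finset G) (Sig : Finset (AddChar G ℂ))
    (p q ρ : ℝ) (hp : 1 ≤ p) (hp2 : p ≤ 2) (hq : 2 ≤ q) (hρ : 0 ≤ ρ)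
    (hrest : ∀ f : G → ℂ,
      lpnorm q Sig (dft (fun x => if x ∈ S then f x else 0))
        ≤ ρ * lpnorm p Finset.univ (fun x => if x ∈ S then f x else 0))
    (hsmall : ρ * (S.card : ℝ) ^ (1 / p - 1 / 2) * (Sig.card : ℝ) ^ (1 / 2 - 1 / q) < 1) :
    ∀ f : G → ℂ,
      l2norm Finset.univ f ≤
        (1 - ρ * (S.card : ℝ) ^ (1 / p - 1 / 2) * (Sig.card : ℝ) ^ (1 / 2 - 1 / q))⁻¹ *
          (l2norm Sᶜ f + l2norm Sigᶜ (dft f)) := by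
  intro f
  set ε := ρ * (S.card : ℝ) ^ (1 / p - 1 / 2) * (Sig.card : ℝ) ^ (1 / 2 - 1 / q)
  set g : G → ℂ := fun x ↦ if x ∈ S then f x else 0
  set h : G → ℂ := fun x ↦ if x ∈ Sᶜ then f x else 0
  have hfgh : dft f = dft g + dft h := by rw [← dft_add, ite_mem_add_ite_mem_compl]
  have hp0 : 0 < p := zero_lt_one.trans_le hp
  have hg : l2norm Sig (dft g) ≤ ε * l2norm univ f :=
    calc l2norm Sig (dft g) ≤ ε * l2norm S f := l2norm_le_of_lpnorm_le hp0 hp2 hq hρ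
          (by simpa only [g, lpnorm_univ_ite_mem hp0.ne'] using hrest f)
      _ ≤ ε * l2norm univ f := by gcongr; exact l2norm_mono (subset_univ S) f
  have hh : l2norm Sig (dft h) ≤ l2norm Sᶜ f :=
    calc l2norm Sig (dft h) ≤ l2norm univ (dft h) := l2norm_mono (subset_univ Sig) _
      _ = l2norm Sᶜ f := by rw [l2norm_univ_dft, l2norm_univ_ite_mem]
  have hf : l2norm univ f ≤ ε * l2norm univ f + (l2norm Sᶜ f + l2norm Sigᶜ (dft f)) :=
    calc l2norm univ f = l2norm univ (dft f) := (l2norm_univ_dft f).symm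
      _ ≤ l2norm Sig (dft f) + l2norm Sigᶜ (dft f) := l2norm_univ_le_add_compl Sig _
      _ ≤ l2norm Sig (dft g) + l2norm Sig (dft h) + l2norm Sigᶜ (dft f) := by
          gcongr ?_ + _
          rw [hfgh]
          exact l2norm_add_le _ _ _
      _ ≤ _ := by linarith
  rw [le_inv_mul_iff₀ (sub_pos.2 hsmall)]
  linarith
end

section
/- Let G be a finite abelian group. If S ⊆ G and Σ ⊆ Ĝ satisfy |S|·|Σ| < |G|, then any f : G → ℂ with supp f ⊆ S and supp f̂ ⊆ Σ must be identically zero. -/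
open Finset ComplexConjugate

/-- Fourier inversion: `∑ χ, f̂(χ) χ(x) = √|G| · f x`. -/
lemma dft_inversion {G : Type} [AddCommGroup G] [Fintype G] [DecidableEq G]
    (f : G → ℂ) (x : G) :
    ∑ χ : AddChar G ℂ, dft f χ * χ x = (Real.sqrt (Fintype.card G) : ℂ) * f x := by
  have hN : (0 : ℝ) < Fintype.card G := by positivity
  have hs : (Real.sqrt (Fintype.card G) : ℂ) ≠ 0 := by
    simp [Complex.ofReal_ne_zero, Real.sqrt_ne_zero', hN]
  have key : ∀ y : G, ∑ χ : AddChar G ℂ, f y * conj (χ y) * χ x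
      = if y = x then (Fintype.card G : ℂ) * f y else 0 := by
    intro y
    have : ∀ χ : AddChar G ℂ, f y * conj (χ y) * χ x = f y * χ (x - y) := by
      intro χ
      rw [sub_eq_add_neg, AddChar.map_add_eq_mul, AddChar.map_neg_eq_conj]
      ring
    rw [Finset.sum_congr rfl fun χ _ => this χ, ← Finset.mul_sum,
      AddChar.sum_apply_eq_ite (x - y)]
    simp only [sub_eq_zero]
    by_cases h : x = y
    · simp [h, AddChar.card_eq, mul_comm]
    · simp [h, Ne.symm h]
  calc ∑ χ : AddChar G ℂ, dft f χ * χ x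
      = (Real.sqrt (Fintype.card G) : ℂ)⁻¹ *
        ∑ y : G, ∑ χ : AddChar G ℂ, f y * conj (χ y) * χ x := by
        simp only [dft, Finset.sum_mul, Finset.mul_sum, mul_assoc]
        exact Finset.sum_comm
    _ = (Real.sqrt (Fintype.card G) : ℂ)⁻¹ * ((Fintype.card G : ℂ) * f x) := by
        rw [Finset.sum_congr rfl fun y _ => key y, Finset.sum_ite_eq' Finset.univ x
          (fun y => (Fintype.card G : ℂ) * f y)]
        simp
    _ = (Real.sqrt (Fintype.card G) : ℂ) * f x := by
        have : ((Fintype.card G : ℝ) : ℂ) =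
            (Real.sqrt (Fintype.card G) : ℂ) * (Real.sqrt (Fintype.card G) : ℂ) := by
          rw [← Complex.ofReal_mul, Real.mul_self_sqrt hN.le]
        push_cast at this ⊢
        rw [this]; field_simp

/-- Weak annihilating pair (Matolcsi–Szücs): if `|S| |Σ| < |G|`, any `f`
supported in `S` with Fourier transform supported in `Σ` vanishes identically. -/
theorem stmt2 {G : Type} [AddCommGroup G] [Fintype G] [DecidableEq G]
    (S : Finset G) (Sig : Finset (AddChar G ℂ))
    (hsmall : S.card * Sig.card < Fintype.card G)
    (f : G → ℂ) (hS : ∀ x, x ∉ S → f x = 0)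
    (hSig : ∀ χ, χ ∉ Sig → dft f χ = 0) :
    f = 0 := by
  by_contra hf
  -- pick x0 maximizing ‖f x‖
  obtain ⟨x0, -, hx0⟩ := Finset.exists_max_image Finset.univ (fun x => ‖f x‖)
    ⟨Classical.arbitrary G, Finset.mem_univ _⟩
  set M : ℝ := ‖f x0‖ with hM
  have hMpos : 0 < M := by
    rcases Function.ne_iff.1 hf with ⟨x, hx⟩
    have := hx0 x (Finset.mem_univ x)
    have : 0 < ‖f x‖ := by simpa [norm_pos_iff] using hx
    linarith [hx0 x (Finset.mem_univ x)]
  have hN : (0 : ℝ) < Fintype.card G := by positivity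
  have hsq : (0 : ℝ) < Real.sqrt (Fintype.card G) := Real.sqrt_pos.2 hN
  -- bound on each Fourier coefficient
  have hdft : ∀ χ : AddChar G ℂ, ‖dft f χ‖ ≤ (Real.sqrt (Fintype.card G))⁻¹ * (S.card * M) := by
    intro χ
    have h1 : ‖∑ x : G, f x * conj (χ x)‖ ≤ S.card * M := by
      rw [← Finset.sum_subset (Finset.subset_univ S) (by intro x _ hx; simp [hS x hx])]
      calc ‖∑ x ∈ S, f x * conj (χ x)‖ ≤ ∑ x ∈ S, ‖f x * conj (χ x)‖ := norm_sum_le _ _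
        _ ≤ ∑ x ∈ S, M := by
            apply Finset.sum_le_sum
            intro x _
            rw [norm_mul, RCLike.norm_conj, AddChar.norm_apply, mul_one]
            exact hx0 x (Finset.mem_univ x)
        _ = S.card * M := by rw [Finset.sum_const, nsmul_eq_mul]
    calc ‖dft f χ‖ = (Real.sqrt (Fintype.card G))⁻¹ * ‖∑ x : G, f x * conj (χ x)‖ := by
          rw [dft, norm_mul, norm_inv, Complex.norm_real, Real.norm_eq_abs,
            abs_of_pos hsq]
      _ ≤ (Real.sqrt (Fintype.card G))⁻¹ * (S.card * M) := by
          exact mul_le_mul_of_nonneg_left h1 (by positivity)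
  -- inversion at x0
  have hinv := dft_inversion f x0
  have hsum : ∑ χ : AddChar G ℂ, dft f χ * χ x0 = ∑ χ ∈ Sig, dft f χ * χ x0 := by
    rw [← Finset.sum_subset (Finset.subset_univ Sig)]
    intro χ _ hχ; simp [hSig χ hχ]
  have hnorm : Real.sqrt (Fintype.card G) * M ≤
      Sig.card * ((Real.sqrt (Fintype.card G))⁻¹ * (S.card * M)) := by
    have : Real.sqrt (Fintype.card G) * M = ‖∑ χ ∈ Sig, dft f χ * χ x0‖ := by
      rw [← hsum, hinv, norm_mul, Complex.norm_real, Real.norm_eq_abs, abs_of_pos hsq]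
    rw [this]
    calc ‖∑ χ ∈ Sig, dft f χ * χ x0‖ ≤ ∑ χ ∈ Sig, ‖dft f χ * χ x0‖ := norm_sum_le _ _
      _ ≤ ∑ χ ∈ Sig, (Real.sqrt (Fintype.card G))⁻¹ * (S.card * M) := by
          apply Finset.sum_le_sum
          intro χ _
          rw [norm_mul, AddChar.norm_apply, mul_one]
          exact hdft χ
      _ = Sig.card * ((Real.sqrt (Fintype.card G))⁻¹ * (S.card * M)) := by
          rw [Finset.sum_const, nsmul_eq_mul]
  -- derive contradiction
  have hfinal : (Fintype.card G : ℝ) ≤ S.card * Sig.card := by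
    have h := mul_le_mul_of_nonneg_left hnorm hsq.le
    rw [← mul_assoc, Real.mul_self_sqrt hN.le] at h
    have h' : (Fintype.card G : ℝ) * M ≤ S.card * Sig.card * M := by
      calc (Fintype.card G : ℝ) * M ≤ Real.sqrt (Fintype.card G) *
            (Sig.card * ((Real.sqrt (Fintype.card G))⁻¹ * (S.card * M))) := h
        _ = S.card * Sig.card * M := by field_simp
    exact le_of_mul_le_mul_right (by linarith) hMpos
  have : (Fintype.card G : ℝ) < Fintype.card G := by
    calc (Fintype.card G : ℝ) ≤ S.card * Sig.card := hfinal
      _ < Fintype.card G := by exact_mod_cast hsmall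
  linarith
end

section
/- Let H be a (finite-dimensional) Hilbert space and P, Q orthogonal projections on H. If ‖QP‖ = 1 then there exists f ≠ 0 with Pf = f and Qf = f. Consequently, if the only vector fixed by both P and Q is 0, then ‖QP‖ < 1. -/
open Metric ContinuousLinearMap

theorem ContinuousLinearMap.exists_norm_le_one_norm_apply_eq_opNorm {𝕜 E F : Type*} [RCLike 𝕜]
    [NormedAddCommGroup E] [NormedSpace 𝕜 E] [ProperSpace E] [NormedAddCommGroup F]
    [NormedSpace 𝕜 F] (f : E →L[𝕜] F) :
    ∃ x, ‖x‖ ≤ 1 ∧ ‖f x‖ = ‖f‖ := by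
  have hmem : ‖f‖ ∈ (fun x => ‖f x‖) '' closedBall (0 : E) 1 := by
    rw [← f.sSup_unitClosedBall_eq_norm]
    exact ((isCompact_closedBall 0 1).image (by fun_prop)).sSup_mem
      ((nonempty_closedBall.mpr zero_le_one).image _)
  obtain ⟨x, hx, hfx⟩ := hmem
  exact ⟨x, mem_closedBall_zero_iff.mp hx, hfx⟩

namespace IsStarProjection

theorem norm_mul_le_one {A : Type*} [NonUnitalNormedRing A] [StarRing A] [CStarRing A] {p q : A}
    (hp : IsStarProjection p) (hq : IsStarProjection q) : ‖q * p‖ ≤ 1 :=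
  calc ‖q * p‖ ≤ ‖q‖ * ‖p‖ := norm_mul_le q p
    _ ≤ 1 := mul_le_one₀ (hq.norm_le q) (norm_nonneg p) (hp.norm_le p)

variable {𝕜 E : Type*} [RCLike 𝕜] [NormedAddCommGroup E] [InnerProductSpace 𝕜 E]
  [CompleteSpace E] {P Q : E →L[𝕜] E}

theorem of_comp_self_of_adjoint_eq (hP : P ∘L P = P) (hPa : adjoint P = P) :
    IsStarProjection P :=
  ⟨hP, (star_eq_adjoint P).trans hPa⟩

theorem norm_apply_le (hP : IsStarProjection P) (x : E) : ‖P x‖ ≤ ‖x‖ := by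
  obtain ⟨K, _, rfl⟩ := isStarProjection_iff_eq_starProjection.mp hP
  exact K.norm_starProjection_apply_le x

theorem apply_eq_self_of_norm_apply_eq (hP : IsStarProjection P) {x : E} (hx : ‖P x‖ = ‖x‖) :
    P x = x := by
  obtain ⟨K, _, rfl⟩ := isStarProjection_iff_eq_starProjection.mp hP
  exact K.starProjection_eq_self_iff.mpr ((K.mem_iff_norm_starProjection x).mpr hx)

/-- If `‖QP‖ = 1` is attained at `x`, then `1 = ‖QPx‖ ≤ ‖Px‖ ≤ ‖x‖ ≤ 1`, and equality in the
first step makes the unit vector `Px` fixed by `Q`. -/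
theorem exists_ne_zero_fixed_of_norm_comp_eq_one [ProperSpace E] (hP : IsStarProjection P)
    (hQ : IsStarProjection Q) (h : ‖Q ∘L P‖ = 1) :
    ∃ f : E, f ≠ 0 ∧ P f = f ∧ Q f = f := by
  obtain ⟨x, hx, hQPx⟩ := (Q ∘L P).exists_norm_le_one_norm_apply_eq_opNorm
  rw [h, comp_apply] at hQPx
  have hPx : ‖P x‖ = 1 :=
    le_antisymm ((hP.norm_apply_le x).trans hx) (hQPx ▸ hQ.norm_apply_le (P x))
  refine ⟨P x, norm_ne_zero_iff.mp (by simp [hPx]), ?_, ?_⟩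
  · exact congr($(hP.isIdempotentElem.eq) x)
  · exact hQ.apply_eq_self_of_norm_apply_eq (hQPx.trans hPx.symm)

end IsStarProjection

/-- for orthogonal projections `P, Q` on a finite-dimensional complex
Hilbert space, `‖QP‖ = 1` implies a nonzero common fixed vector; hence if the only
common fixed vector is `0`, then `‖QP‖ < 1`. -/
theorem stmt11 {H : Type} [NormedAddCommGroup H] [InnerProductSpace ℂ H]
    [FiniteDimensional ℂ H]
    (P Q : H →L[ℂ] H)
    (hP : P ∘L P = P) (hPa : ContinuousLinearMap.adjoint P = P)
    (hQ : Q ∘L Q = Q) (hQa : ContinuousLinearMap.adjoint Q = Q) :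
    (‖Q ∘L P‖ = 1 → ∃ f : H, f ≠ 0 ∧ P f = f ∧ Q f = f) ∧
    ((∀ f : H, P f = f → Q f = f → f = 0) → ‖Q ∘L P‖ < 1) := by
  have hPs := IsStarProjection.of_comp_self_of_adjoint_eq hP hPa
  have hQs := IsStarProjection.of_comp_self_of_adjoint_eq hQ hQa
  refine ⟨hPs.exists_ne_zero_fixed_of_norm_comp_eq_one hQs, fun hfix => ?_⟩
  refine (hPs.norm_mul_le_one hQs).lt_of_ne fun h => ?_
  obtain ⟨f, hf, hPf, hQf⟩ := hPs.exists_ne_zero_fixed_of_norm_comp_eq_one hQs h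
  exact hf (hfix f hPf hQf)
end
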